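/- arXiv:2506.19821 — 3 statements merged into one kernel-verified Lean document; each statement's English description precedes it below -/
import Mathlib

section
/- Let A ∈ ℝ^{n×m} and let permutations σ_r of rows and σ_c of columns be given. Under the von Neumann neighborhood (each cell (k,ℓ) is neighbored by (k±1,ℓ) and (k,ℓ±1) when these indices lie in range), the total ℓ^p stress of the permuted matrix equals Σ_{j=1}^m Σ_{(i,k)∈A_N} 2|a_{ij} − a_{kj}|^p + Σ_{i=1}^n Σ_{(j,ℓ)∈A_M} 2|a_{ij} − a_{iℓ}|^p, where A_N is the set of consecutive pairs of rows in the ordering induced by σ_r and A_M the set of consecutive pairs of columns in the ordering induced by σ_c. -/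
/-!
Split the von Neumann neighbours of a cell into its vertical and its horizontal neighbours:
the stress becomes a sum of one-dimensional stresses of the columns and of the rows. Along
one line, every unordered pair of consecutive positions is counted twice, once in each
order, and after undoing the permutation those pairs are exactly the consecutive pairs.
-/

open Finset

/-- Total ℓᵖ stress of a matrix `B` under the von Neumann neighborhood:
cells at Euclidean distance exactly 1. -/
noncomputable def stressVN (n m : ℕ) (p : ℝ) (B : Fin n → Fin m → ℝ) : ℝ :=
  ∑ k : Fin n, ∑ l : Fin m, ∑ k' : Fin n, ∑ l' : Fin m,
    if ((k' : ℤ) - (k : ℤ)) ^ 2 + ((l' : ℤ) - (l : ℤ)) ^ 2 = 1 then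
      |B k l - B k' l'| ^ p
    else 0

theorem Int.sq_add_sq_eq_one_iff (x y : ℤ) :
    x ^ 2 + y ^ 2 = 1 ↔ x = 0 ∧ y ^ 2 = 1 ∨ y = 0 ∧ x ^ 2 = 1 := by
  have hx := sq_nonneg x
  have hy := sq_nonneg y
  constructor
  · intro h
    rcases (by omega : x ^ 2 = 0 ∨ y ^ 2 = 0) with h0 | h0
    · exact .inl ⟨pow_eq_zero_iff two_ne_zero |>.mp h0, by omega⟩
    · exact .inr ⟨pow_eq_zero_iff two_ne_zero |>.mp h0, by omega⟩
  · rintro (⟨rfl, h⟩ | ⟨rfl, h⟩) <;> simpa using h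

theorem Nat.intCast_sub_sq_eq_one_iff (a b : ℕ) :
    ((a : ℤ) - b) ^ 2 = 1 ↔ a = b + 1 ∨ b = a + 1 := by
  rw [sq_eq_one_iff]
  omega

theorem Fintype.sum_sum_ite_sub_sq_eq_one {ι M : Type*} [Fintype ι] [AddCommMonoid M]
    (pos : ι → ℕ) (f : ι → ι → M) :
    ∑ i, ∑ k, (if ((pos k : ℤ) - pos i) ^ 2 = 1 then f i k else 0) =
      ∑ i, ∑ k, if pos k = pos i + 1 then f i k + f k i else 0 := by
  have hsplit : ∀ i k, (if ((pos k : ℤ) - pos i) ^ 2 = 1 then f i k else 0) =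
      (if pos k = pos i + 1 then f i k else 0) + if pos i = pos k + 1 then f i k else 0 := by
    intro i k
    simp only [Nat.intCast_sub_sq_eq_one_iff]
    split_ifs <;> first | omega | simp
  simp only [hsplit, sum_add_distrib, ite_add_zero]
  rw [sum_comm (f := fun i k => if pos i = pos k + 1 then f i k else 0)]

noncomputable def lineStress {n : ℕ} (p : ℝ) (v : Fin n → ℝ) : ℝ :=
  ∑ k : Fin n, ∑ k' : Fin n, if ((k' : ℤ) - (k : ℤ)) ^ 2 = 1 then |v k - v k'| ^ p else 0

theorem stressVN_eq_sum_lineStress (n m : ℕ) (p : ℝ) (B : Fin n → Fin m → ℝ) :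
    stressVN n m p B =
      (∑ l : Fin m, lineStress p (fun k => B k l)) + ∑ k : Fin n, lineStress p (B k) := by
  have hsplit : ∀ (k k' : Fin n) (l l' : Fin m),
      (if ((k' : ℤ) - (k : ℤ)) ^ 2 + ((l' : ℤ) - (l : ℤ)) ^ 2 = 1 then |B k l - B k' l'| ^ p
        else 0) =
        (if l = l' then if ((k' : ℤ) - (k : ℤ)) ^ 2 = 1 then |B k l - B k' l'| ^ p else 0
          else 0) +
        if k = k' then if ((l' : ℤ) - (l : ℤ)) ^ 2 = 1 then |B k l - B k' l'| ^ p else 0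
          else 0 := by
    intro k k' l l'
    simp only [Int.sq_add_sq_eq_one_iff, sub_eq_zero, Nat.cast_inj, Fin.val_inj,
      eq_comm (a := k'), eq_comm (a := l')]
    by_cases hk : k = k' <;> by_cases hl : l = l' <;> simp_all
  simp only [stressVN, lineStress, hsplit, sum_add_distrib, sum_ite_irrel, sum_ite_eq,
    sum_const_zero, mem_univ, if_true]
  rw [sum_comm]

theorem lineStress_comp_symm {n : ℕ} (p : ℝ) (v : Fin n → ℝ) (σ : Equiv.Perm (Fin n)) :
    lineStress p (v ∘ σ.symm) =
      ∑ i, ∑ k, if (σ k : ℕ) = (σ i : ℕ) + 1 then 2 * |v i - v k| ^ p else 0 := by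
  have hreindex : lineStress p (v ∘ σ.symm) =
      ∑ i, ∑ k, if ((σ k : ℕ) - (σ i : ℕ) : ℤ) ^ 2 = 1 then |v i - v k| ^ p else 0 := by
    rw [lineStress, ← Equiv.sum_comp σ]
    refine sum_congr rfl fun i _ => ?_
    rw [← Equiv.sum_comp σ]
    simp only [Function.comp_apply, Equiv.symm_apply_apply]
  rw [hreindex, Fintype.sum_sum_ite_sub_sq_eq_one (fun i => (σ i : ℕ))]
  refine sum_congr rfl fun i _ => sum_congr rfl fun k _ => ?_
  rw [abs_sub_comm (v k), two_mul]

theorem stressVN_eq_consecutive_pairs_general (n m : ℕ) (p : ℝ)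
    (A : Fin n → Fin m → ℝ) (σr : Equiv.Perm (Fin n)) (σc : Equiv.Perm (Fin m)) :
    stressVN n m p (fun k l => A (σr.symm k) (σc.symm l)) =
      (∑ j : Fin m, ∑ i : Fin n, ∑ k : Fin n,
        if (σr k : ℕ) = (σr i : ℕ) + 1 then 2 * |A i j - A k j| ^ p else 0)
      + (∑ i : Fin n, ∑ j : Fin m, ∑ l : Fin m,
        if (σc l : ℕ) = (σc j : ℕ) + 1 then 2 * |A i j - A i l| ^ p else 0) := by
  rw [stressVN_eq_sum_lineStress,
    ← Equiv.sum_comp σc (fun l => lineStress p fun k => A (σr.symm k) (σc.symm l)),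
    ← Equiv.sum_comp σr (fun k => lineStress p fun l => A (σr.symm k) (σc.symm l))]
  simp only [Equiv.symm_apply_apply]
  congr 1 <;> refine sum_congr rfl fun _ _ => ?_
  · exact lineStress_comp_symm p (fun i => A i _) σr
  · exact lineStress_comp_symm p (A _) σc

/-- The total ℓᵖ von Neumann stress of the matrix permuted by `(σr, σc)` equals the
sum over columns of `2|a_{ij} − a_{kj}|ᵖ` over consecutive row pairs, plus the sum
over rows of `2|a_{ij} − a_{iℓ}|ᵖ` over consecutive column pairs. -/
theorem stressVN_eq_consecutive_pairs (n m : ℕ) (p : ℝ) (hp : 1 ≤ p)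
    (A : Fin n → Fin m → ℝ) (σr : Equiv.Perm (Fin n)) (σc : Equiv.Perm (Fin m)) :
    stressVN n m p (fun k l => A (σr.symm k) (σc.symm l)) =
      (∑ j : Fin m, ∑ i : Fin n, ∑ k : Fin n,
        if (σr k : ℕ) = (σr i : ℕ) + 1 then 2 * |A i j - A k j| ^ p else 0)
      + (∑ i : Fin n, ∑ j : Fin m, ∑ l : Fin m,
        if (σc l : ℕ) = (σc j : ℕ) + 1 then 2 * |A i j - A i l| ^ p else 0) :=
  stressVN_eq_consecutive_pairs_general n m p A σr σc
end

section
/- Maximizing McCormick's Measure of Effectiveness ME(B) = (1/2)[Σ_{k,ℓ} b_{kℓ}(b_{k,ℓ+1}+b_{k,ℓ−1}) + Σ_{k,ℓ} b_{kℓ}(b_{k+1,ℓ}+b_{k−1,ℓ})] over all row and column permutations of A is equivalent to finding a maximum-weight Hamiltonian path on the rows with edge weights ω^{ME}_{ik} = Σ_j a_{ij}a_{kj}, and a maximum-weight Hamiltonian path on the columns with edge weights τ^{ME}_{jℓ} = Σ_i a_{ij}a_{iℓ}; the optimal ME value equals the sum of the two maximum path weights. -/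
open Finset

/-- Extension of a matrix to integer indices; out-of-range entries are `0`. -/
noncomputable def extM (n m : ℕ) (B : Fin n → Fin m → ℝ) (k l : ℤ) : ℝ :=
  if h : 0 ≤ k ∧ k < n ∧ 0 ≤ l ∧ l < m then
    B ⟨k.toNat, by omega⟩ ⟨l.toNat, by omega⟩
  else 0

/-- McCormick's Measure of Effectiveness of `B ∈ ℝ^{n×m}` (out-of-range entries 0). -/
noncomputable def ME (n m : ℕ) (B : Fin n → Fin m → ℝ) : ℝ :=
  (1 / 2) * (∑ k : Fin n, ∑ l : Fin m,
      B k l * (extM n m B (k : ℤ) ((l : ℤ) + 1) + extM n m B (k : ℤ) ((l : ℤ) - 1)))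
  + (1 / 2) * (∑ k : Fin n, ∑ l : Fin m,
      B k l * (extM n m B ((k : ℤ) + 1) (l : ℤ) + extM n m B ((k : ℤ) - 1) (l : ℤ)))

/-- Weight of the Hamiltonian path induced by permutation `σ` for edge weights `ω`. -/
noncomputable def pathWeight (n : ℕ) (ω : Fin n → Fin n → ℝ)
    (σ : Equiv.Perm (Fin n)) : ℝ :=
  ∑ i : Fin n, ∑ k : Fin n, if (σ k : ℕ) = (σ i : ℕ) + 1 then ω i k else 0

/-!
Both halves of `ME` count every pair of adjacent entries twice, and the zeros outside the
matrix remove the boundary terms, so `ME B` is the sum of the products of horizontally adjacent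
entries plus that of vertically adjacent ones. After permuting, the horizontal sum is the sum,
over consecutive column positions, of the inner product of the two columns of `A` placed there:
the weight of the column path `σc` for `τ`, independent of `σr`. Symmetrically the vertical sum
is the row path weight of `σr`. Hence `ME` is maximized by maximizing the two path weights
independently, and the finitely many permutations guarantee that all maxima are attained.
-/

theorem extM_coe {n m : ℕ} (B : Fin n → Fin m → ℝ) (k : Fin n) (l : Fin m) :
    extM n m B k l = B k l := by
  simp [extM]

theorem extM_of_not_mem {n m : ℕ} (B : Fin n → Fin m → ℝ) {k l : ℤ}
    (h : ¬(0 ≤ k ∧ k < n ∧ 0 ≤ l ∧ l < m)) : extM n m B k l = 0 :=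
  dif_neg h

theorem extM_transpose {n m : ℕ} (B : Fin n → Fin m → ℝ) (k l : ℤ) :
    extM m n (fun l k => B k l) l k = extM n m B k l := by
  unfold extM
  split_ifs <;> first | rfl | omega

theorem extM_add_one_eq_sum {n m : ℕ} (B : Fin n → Fin m → ℝ) (k : Fin n) (l : Fin m) :
    extM n m B k (l + 1) = ∑ l' : Fin m, if (l' : ℕ) = l + 1 then B k l' else 0 := by
  by_cases hl : (l : ℕ) + 1 < m
  · have hcond : ∀ l' : Fin m, (l' : ℕ) = l + 1 ↔ l' = ⟨l + 1, hl⟩ := fun l' => by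
      rw [Fin.ext_iff]
    simp_rw [hcond, sum_ite_eq', mem_univ, if_true]
    simpa using extM_coe B k ⟨l + 1, hl⟩
  · rw [extM_of_not_mem B (by omega), sum_eq_zero]
    intro l' _
    rw [if_neg (by omega)]

theorem sum_range_mul_sub_one {R : Type*} [CommSemiring R] {f : ℤ → R} {m : ℕ}
    (h₀ : f (-1) = 0) (hm : f m = 0) :
    ∑ l ∈ range m, f l * f (l - 1) = ∑ l ∈ range m, f l * f (l + 1) := by
  have hsucc := sum_range_succ (fun l : ℕ => f l * f (l - 1)) m
  have hsucc' := sum_range_succ' (fun l : ℕ => f l * f (l - 1)) m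
  push_cast at hsucc hsucc'
  simp only [add_sub_cancel_right, h₀, hm, zero_mul, mul_zero, add_zero] at hsucc hsucc'
  rw [← hsucc, hsucc']
  exact sum_congr rfl fun l _ => mul_comm _ _

theorem half_sum_range_mul_neighbours {f : ℤ → ℝ} {m : ℕ} (h₀ : f (-1) = 0) (hm : f m = 0) :
    (1 / 2) * ∑ l ∈ range m, f l * (f (l + 1) + f (l - 1)) =
      ∑ l ∈ range m, f l * f (l + 1) := by
  simp only [mul_add, sum_add_distrib, sum_range_mul_sub_one h₀ hm]
  ring

noncomputable def horizontalBonds {n m : ℕ} (B : Fin n → Fin m → ℝ) : ℝ :=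
  ∑ k : Fin n, ∑ l : Fin m, ∑ l' : Fin m, if (l' : ℕ) = l + 1 then B k l * B k l' else 0

theorem half_sum_mul_horizontal_neighbours {n m : ℕ} (B : Fin n → Fin m → ℝ) :
    (1 / 2) * ∑ k : Fin n, ∑ l : Fin m,
        B k l * (extM n m B k ((l : ℤ) + 1) + extM n m B k ((l : ℤ) - 1)) =
      horizontalBonds B := by
  rw [mul_sum]
  refine sum_congr rfl fun k _ => ?_
  set f : ℤ → ℝ := fun l => extM n m B k l
  have hB : ∀ l : Fin m, B k l = f l := fun l => (extM_coe B k l).symm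
  have h₀ : f (-1) = 0 := extM_of_not_mem B (by omega)
  have hm : f m = 0 := extM_of_not_mem B (by omega)
  calc (1 / 2) * ∑ l : Fin m, B k l * (f (l + 1) + f (l - 1))
      = (1 / 2) * ∑ l ∈ range m, f l * (f (l + 1) + f (l - 1)) := by
        simp only [hB, Fin.sum_univ_eq_sum_range (fun l : ℕ => f l * (f (l + 1) + f (l - 1)))]
    _ = ∑ l ∈ range m, f l * f (l + 1) := half_sum_range_mul_neighbours h₀ hm
    _ = ∑ l : Fin m, B k l * f (l + 1) := by
        simp only [hB, Fin.sum_univ_eq_sum_range (fun l : ℕ => f l * f (l + 1))]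
    _ = _ := by
        simp only [f, extM_add_one_eq_sum, mul_sum, mul_ite, mul_zero]

theorem ME_eq_horizontalBonds_add {n m : ℕ} (B : Fin n → Fin m → ℝ) :
    ME n m B = horizontalBonds B + horizontalBonds (fun l k => B k l) := by
  rw [ME, half_sum_mul_horizontal_neighbours B,
    ← half_sum_mul_horizontal_neighbours (fun l k => B k l), sum_comm]
  simp only [extM_transpose]

theorem pathWeight_eq_sum_succ (n : ℕ) (ω : Fin n → Fin n → ℝ) (σ : Equiv.Perm (Fin n)) :
    pathWeight n ω σ =
      ∑ a : Fin n, ∑ b : Fin n, if (b : ℕ) = a + 1 then ω (σ.symm a) (σ.symm b) else 0 := by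
  rw [pathWeight, ← σ.symm.sum_comp]
  refine sum_congr rfl fun a _ => ?_
  rw [← σ.symm.sum_comp]
  simp only [Equiv.apply_symm_apply]

theorem horizontalBonds_perm {n m : ℕ} (A : Fin n → Fin m → ℝ)
    (σr : Equiv.Perm (Fin n)) (σc : Equiv.Perm (Fin m)) :
    horizontalBonds (fun k l => A (σr.symm k) (σc.symm l)) =
      pathWeight m (fun j l => ∑ i : Fin n, A i j * A i l) σc := by
  rw [pathWeight_eq_sum_succ, horizontalBonds, sum_comm]
  refine sum_congr rfl fun a _ => ?_
  rw [sum_comm]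
  refine sum_congr rfl fun b _ => ?_
  rw [sum_ite_irrel, sum_const_zero,
    σr.symm.sum_comp fun i => A i (σc.symm a) * A i (σc.symm b)]

theorem ME_perm_eq_pathWeight_add {n m : ℕ} (A : Fin n → Fin m → ℝ)
    (σr : Equiv.Perm (Fin n)) (σc : Equiv.Perm (Fin m)) :
    ME n m (fun k l => A (σr.symm k) (σc.symm l)) =
      pathWeight n (fun i k => ∑ j : Fin m, A i j * A k j) σr +
        pathWeight m (fun j l => ∑ i : Fin n, A i j * A i l) σc := by
  rw [ME_eq_horizontalBonds_add, horizontalBonds_perm, add_comm]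
  exact congrArg (· + _) (horizontalBonds_perm (fun j i => A i j) σc σr)

theorem isGreatest_setOf_eq_apply {α γ : Type*} [Preorder γ] {f : α → γ} {a : α}
    (h : ∀ x, f x ≤ f a) :
    IsGreatest {w | ∃ x, w = f x} (f a) :=
  ⟨⟨a, rfl⟩, by rintro _ ⟨x, rfl⟩; exact h x⟩

theorem isGreatest_setOf_eq_apply₂ {α β γ : Type*} [Preorder γ] {f : α → β → γ} {a : α} {b : β}
    (h : ∀ x y, f x y ≤ f a b) : IsGreatest {w | ∃ x y, w = f x y} (f a b) :=
  ⟨⟨a, b, rfl⟩, by rintro _ ⟨x, y, rfl⟩; exact h x y⟩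

theorem ME_max_eq_hamiltonian_paths_general (n m : ℕ)
    (A : Fin n → Fin m → ℝ) :
    (∃ (σr : Equiv.Perm (Fin n)) (σc : Equiv.Perm (Fin m)),
      ME n m (fun k l => A (σr.symm k) (σc.symm l)) =
        sSup {s : ℝ | ∃ (σr : Equiv.Perm (Fin n)) (σc : Equiv.Perm (Fin m)),
          s = ME n m (fun k l => A (σr.symm k) (σc.symm l))}) ∧
    sSup {s : ℝ | ∃ (σr : Equiv.Perm (Fin n)) (σc : Equiv.Perm (Fin m)),
        s = ME n m (fun k l => A (σr.symm k) (σc.symm l))} =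
      sSup {w : ℝ | ∃ σr : Equiv.Perm (Fin n),
          w = pathWeight n (fun i k => ∑ j : Fin m, A i j * A k j) σr}
      + sSup {w : ℝ | ∃ σc : Equiv.Perm (Fin m),
          w = pathWeight m (fun j l => ∑ i : Fin n, A i j * A i l) σc} := by
  obtain ⟨σr, hσr⟩ := Finite.exists_max (pathWeight n (fun i k => ∑ j : Fin m, A i j * A k j))
  obtain ⟨σc, hσc⟩ := Finite.exists_max (pathWeight m (fun j l => ∑ i : Fin n, A i j * A i l))
  have hME : IsGreatest {s : ℝ | ∃ (σr : Equiv.Perm (Fin n)) (σc : Equiv.Perm (Fin m)),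
      s = ME n m (fun k l => A (σr.symm k) (σc.symm l))}
      (ME n m (fun k l => A (σr.symm k) (σc.symm l))) :=
    isGreatest_setOf_eq_apply₂ fun x y => by
      simp only [ME_perm_eq_pathWeight_add]
      exact add_le_add (hσr x) (hσc y)
  rw [hME.csSup_eq, (isGreatest_setOf_eq_apply hσr).csSup_eq,
    (isGreatest_setOf_eq_apply hσc).csSup_eq]
  exact ⟨⟨σr, σc, rfl⟩, ME_perm_eq_pathWeight_add A σr σc⟩

/-- Maximizing the Measure of Effectiveness over all row and column permutations of
`A` is equivalent to finding a maximum-weight Hamiltonian path on the rows with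
weights `ω^{ME}_{ik} = Σ_j a_{ij} a_{kj}` and one on the columns with weights
`τ^{ME}_{jℓ} = Σ_i a_{ij} a_{iℓ}`; the maxima are attained and the optimal ME value
is the sum of the two maximum path weights. -/
theorem ME_max_eq_hamiltonian_paths (n m : ℕ) (hn : 1 ≤ n) (hm : 1 ≤ m)
    (A : Fin n → Fin m → ℝ) :
    (∃ (σr : Equiv.Perm (Fin n)) (σc : Equiv.Perm (Fin m)),
      ME n m (fun k l => A (σr.symm k) (σc.symm l)) =
        sSup {s : ℝ | ∃ (σr : Equiv.Perm (Fin n)) (σc : Equiv.Perm (Fin m)),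
          s = ME n m (fun k l => A (σr.symm k) (σc.symm l))}) ∧
    sSup {s : ℝ | ∃ (σr : Equiv.Perm (Fin n)) (σc : Equiv.Perm (Fin m)),
        s = ME n m (fun k l => A (σr.symm k) (σc.symm l))} =
      sSup {w : ℝ | ∃ σr : Equiv.Perm (Fin n),
          w = pathWeight n (fun i k => ∑ j : Fin m, A i j * A k j) σr}
      + sSup {w : ℝ | ∃ σc : Equiv.Perm (Fin m),
          w = pathWeight m (fun j l => ∑ i : Fin n, A i j * A i l) σc} :=
  ME_max_eq_hamiltonian_paths_general n m A
end

section
/- Under the Moore neighborhood, the total ℓ^p stress of a matrix permuted by (σ_r, σ_c) equals the von Neumann stress plus 2·Σ_{(i,k)∈A_N} Σ_{(j,ℓ)∈A_M} (|a_{ij} − a_{kℓ}|^p + |a_{iℓ} − a_{kj}|^p), where A_N and A_M are the sets of consecutive row pairs and consecutive column pairs, respectively; in particular the Moore stress is not separable into independent row and column contributions. -/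
/-!
The Moore neighbours of a cell are its von Neumann neighbours together with its four diagonal
neighbours, so the Moore stress is the von Neumann stress plus a diagonal stress. Every diagonal
pair of cells is counted once from each end, and a pair of consecutive rows meets a pair of
consecutive columns in two diagonals, `↘` and `↙`; this gives the factor `2` and the two terms
per pair. Writing the cells of the permuted matrix as `(σr i, σc j)` turns "consecutive" into
membership in `A_N` and `A_M`.
-/

open Finset

/-- Total ℓᵖ stress under the Moore neighborhood:
cells `(k',ℓ')` with `max(|k−k'|,|ℓ−ℓ'|) = 1`. -/
noncomputable def stressMoore (n m : ℕ) (p : ℝ) (B : Fin n → Fin m → ℝ) : ℝ :=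
  ∑ k : Fin n, ∑ l : Fin m, ∑ k' : Fin n, ∑ l' : Fin m,
    if max |(k' : ℤ) - (k : ℤ)| |(l' : ℤ) - (l : ℤ)| = 1 then
      |B k l - B k' l'| ^ p
    else 0

theorem max_abs_eq_one_iff (a b : ℤ) :
    max |a| |b| = 1 ↔ a ^ 2 + b ^ 2 = 1 ∨ (|a| = 1 ∧ |b| = 1) := by
  by_cases hab : |a| ≤ 1 ∧ |b| ≤ 1
  · obtain ⟨ha, hb⟩ := hab
    rw [abs_le] at ha hb
    obtain rfl | rfl | rfl : a = -1 ∨ a = 0 ∨ a = 1 := by omega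
    all_goals obtain rfl | rfl | rfl : b = -1 ∨ b = 0 ∨ b = 1 := by omega
    all_goals norm_num
  · have hmax : 1 < max |a| |b| := by
      rw [not_and_or, not_le, not_le] at hab
      exact lt_max_iff.2 hab
    have hsq : 1 < a ^ 2 + b ^ 2 := by
      rw [← sq_abs a, ← sq_abs b]
      rcases lt_max_iff.1 hmax with h | h <;> nlinarith [sq_nonneg |a|, sq_nonneg |b|]
    refine iff_of_false hmax.ne' ?_
    rintro (h | ⟨ha, hb⟩)
    · omega
    · rw [ha, hb] at hmax; norm_num at hmax

theorem ite_max_abs_eq_one {M : Type*} [AddCommMonoid M] (a b : ℤ) (x : M) :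
    (if max |a| |b| = 1 then x else 0) =
      (if a ^ 2 + b ^ 2 = 1 then x else 0) + (if |a| = 1 ∧ |b| = 1 then x else 0) := by
  by_cases hdiag : |a| = 1 ∧ |b| = 1
  · have hVN : a ^ 2 + b ^ 2 ≠ 1 := by
      rw [← sq_abs a, ← sq_abs b, hdiag.1, hdiag.2]; norm_num
    simp [hdiag, hVN]
  · simp [max_abs_eq_one_iff, hdiag]

theorem sum_ite_abs_sub_eq_one {M : Type*} [AddCommMonoid M] {n : ℕ} (f : Fin n → Fin n → M) :
    ∑ i : Fin n, ∑ i' : Fin n, (if |(i' : ℤ) - i| = 1 then f i i' else 0) =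
      ∑ i : Fin n, ∑ i' : Fin n, if (i' : ℕ) = i + 1 then f i i' + f i' i else 0 := by
  have hsplit : ∀ i i' : Fin n, (if |(i' : ℤ) - i| = 1 then f i i' else 0) =
      (if (i' : ℕ) = i + 1 then f i i' else 0) + (if (i : ℕ) = i' + 1 then f i i' else 0) := by
    intro i i'
    simp only [abs_eq (zero_le_one' ℤ)]
    split_ifs <;> first | omega | simp
  simp only [hsplit, sum_add_distrib, ite_add_zero]
  rw [sum_comm (f := fun i i' : Fin n => if (i : ℕ) = i' + 1 then f i i' else 0)]

theorem sum₄_comp_perm {M : Type*} [AddCommMonoid M] {n m : ℕ}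
    (σ : Equiv.Perm (Fin n)) (τ : Equiv.Perm (Fin m))
    (f : Fin n → Fin n → Fin m → Fin m → M) :
    ∑ i, ∑ k, ∑ j, ∑ l, f (σ i) (σ k) (τ j) (τ l) = ∑ i, ∑ k, ∑ j, ∑ l, f i k j l :=
  Fintype.sum_equiv σ _ _ fun _ => Fintype.sum_equiv σ _ _ fun _ =>
    Fintype.sum_equiv τ _ _ fun _ => Fintype.sum_equiv τ _ _ fun _ => rfl

noncomputable def stressDiag (n m : ℕ) (p : ℝ) (B : Fin n → Fin m → ℝ) : ℝ :=
  ∑ k : Fin n, ∑ k' : Fin n, ∑ l : Fin m, ∑ l' : Fin m,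
    if |(k' : ℤ) - k| = 1 ∧ |(l' : ℤ) - l| = 1 then |B k l - B k' l'| ^ p else 0

theorem stressMoore_eq_stressVN_add_stressDiag (n m : ℕ) (p : ℝ) (B : Fin n → Fin m → ℝ) :
    stressMoore n m p B = stressVN n m p B + stressDiag n m p B := by
  have hdiag : stressDiag n m p B = ∑ k : Fin n, ∑ l : Fin m, ∑ k' : Fin n, ∑ l' : Fin m,
      if |(k' : ℤ) - k| = 1 ∧ |(l' : ℤ) - l| = 1 then |B k l - B k' l'| ^ p else 0 :=
    sum_congr rfl fun k _ => sum_comm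
  simp only [hdiag, stressMoore, stressVN, ← sum_add_distrib, ite_max_abs_eq_one]

theorem stressDiag_eq_two_mul_sum (n m : ℕ) (p : ℝ) (B : Fin n → Fin m → ℝ) :
    stressDiag n m p B = 2 * ∑ k : Fin n, ∑ k' : Fin n, ∑ l : Fin m, ∑ l' : Fin m,
      if (k' : ℕ) = k + 1 ∧ (l' : ℕ) = l + 1 then
        |B k l - B k' l'| ^ p + |B k l' - B k' l| ^ p
      else 0 := by
  have hrows : stressDiag n m p B = ∑ k : Fin n, ∑ k' : Fin n, if |(k' : ℤ) - k| = 1 then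
      ∑ l : Fin m, ∑ l' : Fin m, (if |(l' : ℤ) - l| = 1 then |B k l - B k' l'| ^ p else 0)
      else 0 := by
    simp only [stressDiag, ite_and, ite_sum_zero]
  rw [hrows, sum_ite_abs_sub_eq_one, mul_sum]
  refine sum_congr rfl fun k _ => ?_
  rw [mul_sum]
  refine sum_congr rfl fun k' _ => ?_
  by_cases hk : (k' : ℕ) = k + 1
  · simp only [hk, true_and, if_true, ← sum_add_distrib, ← ite_add_zero]
    rw [sum_ite_abs_sub_eq_one, mul_sum]
    refine sum_congr rfl fun l _ => ?_
    rw [mul_sum]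
    refine sum_congr rfl fun l' _ => ?_
    rw [mul_ite, mul_zero, abs_sub_comm (B k' l), abs_sub_comm (B k' l'), add_comm _ (_ ^ p),
      ← two_mul]
  · simp [hk]

theorem stressMoore_decomposition_general (n m : ℕ) (p : ℝ)
    (A : Fin n → Fin m → ℝ) (σr : Equiv.Perm (Fin n)) (σc : Equiv.Perm (Fin m)) :
    stressMoore n m p (fun k l => A (σr.symm k) (σc.symm l)) =
      stressVN n m p (fun k l => A (σr.symm k) (σc.symm l)) +
        2 * ∑ i : Fin n, ∑ k : Fin n, ∑ j : Fin m, ∑ l : Fin m,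
          if (σr k : ℕ) = (σr i : ℕ) + 1 ∧ (σc l : ℕ) = (σc j : ℕ) + 1 then
            |A i j - A k l| ^ p + |A i l - A k j| ^ p
          else 0 := by
  rw [stressMoore_eq_stressVN_add_stressDiag, stressDiag_eq_two_mul_sum, ← sum₄_comp_perm σr σc]
  simp only [Equiv.symm_apply_apply]

/-- Under the Moore neighborhood, the total ℓᵖ stress of the permuted matrix equals
the von Neumann stress plus
`2 Σ_{(i,k)∈A_N} Σ_{(j,ℓ)∈A_M} (|a_{ij} − a_{kℓ}|ᵖ + |a_{iℓ} − a_{kj}|ᵖ)`. -/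
theorem stressMoore_decomposition (n m : ℕ) (p : ℝ) (hp : 1 ≤ p)
    (A : Fin n → Fin m → ℝ) (σr : Equiv.Perm (Fin n)) (σc : Equiv.Perm (Fin m)) :
    stressMoore n m p (fun k l => A (σr.symm k) (σc.symm l)) =
      stressVN n m p (fun k l => A (σr.symm k) (σc.symm l)) +
        2 * ∑ i : Fin n, ∑ k : Fin n, ∑ j : Fin m, ∑ l : Fin m,
          if (σr k : ℕ) = (σr i : ℕ) + 1 ∧ (σc l : ℕ) = (σc j : ℕ) + 1 then
            |A i j - A k l| ^ p + |A i l - A k j| ^ p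
          else 0 :=
  stressMoore_decomposition_general n m p A σr σc
end
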